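/- For any natural numbers m and M with 2^m ≤ M < 2^{m+1}, and any real coefficients a_{2^m}, ..., a_{2^{m+1}-1}, the L^1[0,1] norm of the partial sum ∑_{k=2^m}^{M} a_k W_k is at most the L^2[0,1] norm of the full block sum ∑_{k=2^m}^{2^{m+1}-1} a_k W_k. -/

import Mathlib

open MeasureTheory Filter

noncomputable def rademacher (n : ℕ) (x : ℝ) : ℝ :=
  Real.sign (Real.sin ((2:ℝ)^n * Real.pi * x))

noncomputable def walsh (n : ℕ) (x : ℝ) : ℝ :=
  ∏ i ∈ Finset.range (n+1), if n.testBit i then rademacher (i+1) x else 1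

/-! A Walsh function `W_k` with `k < 2 ^ N` is constant on each dyadic interval of length
`2 ^ (-N)`, with value a product of signs indexed by the binary digits of `k` and of the interval.
Summing over all `2 ^ N` intervals factorises over the digits, which gives orthonormality, hence
`‖∑_{k ∈ s} a_k W_k‖₂² = ∑_{k ∈ s} a_k²`. The `L¹` norm of the partial sum is at most its `L²`
norm (Hölder on the probability space `[0, 1]`), and its coefficient sum of squares is at most
that of the full block. -/

open Finset

theorem Real.measurable_sign : Measurable Real.sign :=
  show Measurable fun r : ℝ => if r < 0 then -1 else if 0 < r then 1 else 0 from
    Measurable.ite (measurableSet_lt measurable_id measurable_const) measurable_const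
      (Measurable.ite (measurableSet_lt measurable_const measurable_id) measurable_const
        measurable_const)

theorem measurable_rademacher (n : ℕ) : Measurable (rademacher n) :=
  Real.measurable_sign.comp (by fun_prop)

theorem abs_rademacher_le_one (n : ℕ) (x : ℝ) : |rademacher n x| ≤ 1 := by
  rcases Real.sign_apply_eq (Real.sin ((2:ℝ)^n * Real.pi * x)) with h | h | h <;>
    simp [rademacher, h]

theorem measurable_walsh (n : ℕ) : Measurable (walsh n) :=
  Finset.measurable_prod _ fun i _ => by
    split_ifs
    · exact measurable_rademacher _
    · exact measurable_const

theorem abs_walsh_le_one (n : ℕ) (x : ℝ) : |walsh n x| ≤ 1 := by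
  rw [walsh, abs_prod]
  refine prod_le_one (fun _ _ => abs_nonneg _) fun i _ => ?_
  split_ifs
  · exact abs_rademacher_le_one _ _
  · simp

section Integrability

variable {μ : Measure ℝ} [IsFiniteMeasure μ]

theorem integrable_walsh_mul_walsh (n k : ℕ) : Integrable (fun x => walsh n x * walsh k x) μ :=
  Integrable.of_bound ((measurable_walsh n).mul (measurable_walsh k)).aestronglyMeasurable 1
    (ae_of_all _ fun x => by
      simpa [abs_mul] using mul_le_one₀ (abs_walsh_le_one n x) (abs_nonneg _)
        (abs_walsh_le_one k x))

theorem memLp_walsh_sum (s : Finset ℕ) (a : ℕ → ℝ) (p : ENNReal) :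
    MemLp (fun x => ∑ k ∈ s, a k * walsh k x) p μ :=
  MemLp.of_bound
    (Finset.measurable_sum _ fun k _ => (measurable_walsh k).const_mul _).aestronglyMeasurable
    (∑ k ∈ s, |a k|) (ae_of_all _ fun x => (abs_sum_le_sum_abs _ _).trans <|
      sum_le_sum fun k _ => by
        simpa [abs_mul] using mul_le_mul_of_nonneg_left (abs_walsh_le_one k x) (abs_nonneg (a k)))

end Integrability

theorem Real.sign_sin_pi_mul_of_mem_Ioo {q : ℕ} {t : ℝ} (ht : t ∈ Set.Ioo (q:ℝ) (q + 1)) :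
    Real.sign (Real.sin (Real.pi * t)) = (-1) ^ q := by
  have hsin : Real.sin (Real.pi * t) = (-1) ^ q * Real.sin (Real.pi * (t - q)) := by
    rw [← Real.sin_add_nat_mul_pi]; ring_nf
  have hpos : 0 < Real.sin (Real.pi * (t - q)) :=
    Real.sin_pos_of_pos_of_lt_pi (by nlinarith [ht.1, Real.pi_pos])
      (by nlinarith [ht.2, Real.pi_pos])
  rcases Nat.even_or_odd q with hq | hq
  · rw [hsin, hq.neg_one_pow, one_mul, Real.sign_of_pos hpos]
  · rw [hsin, hq.neg_one_pow, neg_one_mul, Real.sign_neg, Real.sign_of_pos hpos]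

theorem neg_one_pow_div_two_pow {R : Type*} [Ring R] (j d : ℕ) :
    (-1 : R) ^ (j / 2 ^ d) = if j.testBit d then -1 else 1 := by
  rw [Nat.testBit_eq_decide_div_mod_eq]
  rcases Nat.mod_two_eq_zero_or_one (j / 2 ^ d) with h | h
  · simp [h, (Nat.even_iff.2 h).neg_one_pow]
  · simp [h, (Nat.odd_iff.2 h).neg_one_pow]

theorem rademacher_succ_of_mem_Ioo {N i j : ℕ} (hi : i < N) {x : ℝ}
    (hx : x ∈ Set.Ioo ((j:ℝ) / 2 ^ N) ((j + 1) / 2 ^ N)) :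
    rademacher (i + 1) x = if j.testBit (N - 1 - i) then -1 else 1 := by
  set d := N - 1 - i
  have h2d : (0:ℝ) < 2 ^ d := by positivity
  have hN : (2:ℝ) ^ N = 2 ^ (i + 1) * 2 ^ d := by rw [← pow_add]; congr 1; omega
  have hlo : ((j / 2 ^ d : ℕ) : ℝ) * 2 ^ d ≤ j := by
    exact_mod_cast Nat.div_mul_le_self j (2 ^ d)
  have hhi : (j : ℝ) + 1 ≤ (((j / 2 ^ d : ℕ) : ℝ) + 1) * 2 ^ d := by
    have := Nat.lt_mul_div_succ j (Nat.two_pow_pos d)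
    exact_mod_cast (by linarith : j + 1 ≤ (j / 2 ^ d + 1) * 2 ^ d)
  obtain ⟨hx₁, hx₂⟩ := hx
  rw [hN, div_lt_iff₀ (by positivity)] at hx₁
  rw [hN, lt_div_iff₀ (by positivity)] at hx₂
  have ht : 2 ^ (i + 1) * x ∈ Set.Ioo ((j / 2 ^ d : ℕ) : ℝ) ((j / 2 ^ d : ℕ) + 1) :=
    ⟨by nlinarith, by nlinarith⟩
  rw [rademacher, ← neg_one_pow_div_two_pow, ← Real.sign_sin_pi_mul_of_mem_Ioo ht]
  ring_nf

theorem walsh_eq_prod_range {n N : ℕ} (h : n < N) (x : ℝ) :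
    walsh n x = ∏ i ∈ range N, if n.testBit i then rademacher (i + 1) x else 1 := by
  refine prod_subset (range_subset_range.2 h) fun i _ hi => ?_
  have hn : n < 2 ^ i := Nat.lt_two_pow_self.trans_le
    (Nat.pow_le_pow_right two_pos (by simp at hi; omega))
  simp [Nat.testBit_lt_two_pow hn]

/-- The value of `walsh n` on `(j / 2 ^ N, (j + 1) / 2 ^ N)`: there the `(i + 1)`-st binary
digit of `x` is bit `N - 1 - i` of `j`. -/
def walshDyadic (N n j : ℕ) : ℝ :=
  ∏ i ∈ range N, if n.testBit i ∧ j.testBit (N - 1 - i) then -1 else 1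

theorem walsh_eq_walshDyadic {n N j : ℕ} (h : n < N) {x : ℝ}
    (hx : x ∈ Set.Ioo ((j:ℝ) / 2 ^ N) ((j + 1) / 2 ^ N)) :
    walsh n x = walshDyadic N n j := by
  rw [walsh_eq_prod_range h, walshDyadic]
  refine prod_congr rfl fun i hi => ?_
  rw [rademacher_succ_of_mem_Ioo (mem_range.1 hi) hx]
  by_cases hn : n.testBit i <;> simp [hn]

theorem sum_range_two_pow_prod_testBit {R : Type*} [CommSemiring R] (f : ℕ → Bool → R)
    (N : ℕ) :
    ∑ j ∈ range (2 ^ N), ∏ i ∈ range N, f i (j.testBit i)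
      = ∏ i ∈ range N, (f i false + f i true) := by
  induction N with
  | zero => simp
  | succ N ih =>
    have hlow : ∀ j ∈ range (2 ^ N), ∏ i ∈ range (N + 1), f i (j.testBit i)
        = (∏ i ∈ range N, f i (j.testBit i)) * f N false := fun j hj => by
      rw [prod_range_succ, Nat.testBit_lt_two_pow (mem_range.1 hj)]
    have hhigh : ∀ j ∈ range (2 ^ N), ∏ i ∈ range (N + 1), f i ((2 ^ N + j).testBit i)
        = (∏ i ∈ range N, f i (j.testBit i)) * f N true := fun j hj => by
      rw [prod_range_succ, Nat.testBit_two_pow_add_eq, Nat.testBit_lt_two_pow (mem_range.1 hj),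
        Bool.not_false]
      congr 1
      exact prod_congr rfl fun i hi => by rw [Nat.testBit_two_pow_add_gt (mem_range.1 hi)]
    rw [pow_succ, mul_two, sum_range_add, sum_congr rfl hlow, sum_congr rfl hhigh, ← sum_mul,
      ← sum_mul, ih, prod_range_succ, mul_add]

theorem sum_walshDyadic_mul_walshDyadic {N n k : ℕ} (hn : n < N) (hk : k < N) :
    ∑ j ∈ range (2 ^ N), walshDyadic N n j * walshDyadic N k j
      = if n = k then 2 ^ N else 0 := by
  set g : ℕ → Bool → ℝ := fun i b =>
    (if n.testBit i ∧ b then -1 else 1) * (if k.testBit i ∧ b then -1 else 1)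
  have hprod : ∀ j, walshDyadic N n j * walshDyadic N k j
      = ∏ i ∈ range N, g (N - 1 - i) (j.testBit i) := fun j => by
    rw [walshDyadic, walshDyadic, ← prod_mul_distrib, ← prod_range_reflect _ N]
    refine prod_congr rfl fun i hi => ?_
    rw [show N - 1 - (N - 1 - i) = i by have := mem_range.1 hi; omega]
  have hg : ∀ i, g i false + g i true = if n.testBit i = k.testBit i then 2 else 0 := fun i => by
    simp only [g]
    cases n.testBit i <;> cases k.testBit i <;> norm_num
  simp_rw [hprod]
  rw [sum_range_two_pow_prod_testBit, prod_range_reflect (fun i => g i false + g i true),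
    prod_congr rfl fun i _ => hg i, prod_ite_zero, prod_const, card_range]
  congr 1
  refine propext ⟨fun h => Nat.eq_of_testBit_eq fun i => ?_, fun h i _ => h ▸ rfl⟩
  rcases lt_or_ge i N with hi | hi
  · exact h i (mem_range.2 hi)
  · have hN : N < 2 ^ i := Nat.lt_two_pow_self.trans_le (Nat.pow_le_pow_right two_pos hi)
    rw [Nat.testBit_lt_two_pow (hn.trans hN), Nat.testBit_lt_two_pow (hk.trans hN)]

theorem integral_Icc_eq_sum_integral_Ioo_dyadic {E : Type*} [NormedAddCommGroup E]
    [NormedSpace ℝ E] {f : ℝ → E} (hf : IntegrableOn f (Set.Icc 0 1)) (N : ℕ) :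
    ∫ x in Set.Icc (0:ℝ) 1, f x
      = ∑ j ∈ range (2 ^ N), ∫ x in Set.Ioo ((j:ℝ) / 2 ^ N) ((j + 1) / 2 ^ N), f x := by
  set t : ℕ → ℝ := fun j => j / 2 ^ N
  have ht : ∀ j, t j ≤ t (j + 1) := fun j => by simp only [t]; gcongr; simp
  have hint : ∀ j < 2 ^ N, IntervalIntegrable f volume (t j) (t (j + 1)) := fun j hj => by
    refine (hf.mono_set ?_).intervalIntegrable
    rw [Set.uIcc_of_le (ht j)]
    refine Set.Icc_subset_Icc (by positivity) ?_
    rw [div_le_one (by positivity)]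
    exact_mod_cast hj
  have hsum := intervalIntegral.sum_integral_adjacent_intervals hint
  simp only [t, Nat.cast_zero, zero_div, Nat.cast_pow, Nat.cast_ofNat,
    div_self (pow_ne_zero N (two_ne_zero' ℝ))] at hsum
  rw [integral_Icc_eq_integral_Ioc, ← intervalIntegral.integral_of_le zero_le_one, ← hsum]
  refine sum_congr rfl fun j _ => ?_
  rw [intervalIntegral.integral_of_le (ht j), integral_Ioc_eq_integral_Ioo]
  simp only [t, Nat.cast_add, Nat.cast_one]

theorem integral_walsh_mul_walsh (n k : ℕ) :
    ∫ x in Set.Icc (0:ℝ) 1, walsh n x * walsh k x = if n = k then 1 else 0 := by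
  set N := n + k + 1
  have hpiece : ∀ j : ℕ,
      ∫ x in Set.Ioo ((j:ℝ) / 2 ^ N) ((j + 1) / 2 ^ N), walsh n x * walsh k x
        = walshDyadic N n j * walshDyadic N k j * (2 ^ N)⁻¹ := fun j => by
    rw [setIntegral_congr_fun measurableSet_Ioo fun x hx => by
      rw [walsh_eq_walshDyadic (by omega) hx, walsh_eq_walshDyadic (by omega) hx]]
    rw [setIntegral_const, Real.volume_real_Ioo, smul_eq_mul, mul_comm,
      show ((j:ℝ) + 1) / 2 ^ N - j / 2 ^ N = (2 ^ N)⁻¹ by ring, max_eq_left (by positivity)]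
  rw [integral_Icc_eq_sum_integral_Ioo_dyadic (integrable_walsh_mul_walsh n k) N,
    sum_congr rfl fun j _ => hpiece j, ← sum_mul,
    sum_walshDyadic_mul_walshDyadic (by omega) (by omega)]
  split_ifs <;> simp

theorem integral_sq_walsh_sum (s : Finset ℕ) (a : ℕ → ℝ) :
    ∫ x in Set.Icc (0:ℝ) 1, (∑ k ∈ s, a k * walsh k x) ^ 2 = ∑ k ∈ s, a k ^ 2 := by
  have hint : ∀ k l, Integrable (fun x => a k * a l * (walsh k x * walsh l x))
      (volume.restrict (Set.Icc (0:ℝ) 1)) := fun k l =>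
    (integrable_walsh_mul_walsh k l).const_mul _
  calc ∫ x in Set.Icc (0:ℝ) 1, (∑ k ∈ s, a k * walsh k x) ^ 2
      = ∫ x in Set.Icc (0:ℝ) 1,
          ∑ k ∈ s, ∑ l ∈ s, a k * a l * (walsh k x * walsh l x) := by
        congr 1; ext x
        rw [sq, sum_mul_sum]
        exact sum_congr rfl fun k _ => sum_congr rfl fun l _ => by ring
    _ = ∑ k ∈ s, ∑ l ∈ s, a k * a l * (if k = l then 1 else 0) := by
        rw [integral_finsetSum _ fun k _ => integrable_finsetSum _ fun l _ => hint k l]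
        refine sum_congr rfl fun k _ => ?_
        rw [integral_finsetSum _ fun l _ => hint k l]
        exact sum_congr rfl fun l _ => by rw [integral_const_mul, integral_walsh_mul_walsh]
    _ = ∑ k ∈ s, a k ^ 2 := by simp [sq]

theorem integral_abs_le_integral_abs_rpow_two_rpow_half {α : Type*} [MeasurableSpace α]
    {μ : Measure α} [IsProbabilityMeasure μ] {f : α → ℝ} (hf : MemLp f 2 μ) :
    ∫ x, |f x| ∂μ ≤ (∫ x, |f x| ^ (2:ℝ) ∂μ) ^ ((1:ℝ) / 2) := by
  have := integral_mul_le_Lp_mul_Lq_of_nonneg Real.HolderConjugate.two_two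
    (ae_of_all μ fun x => abs_nonneg (f x)) (ae_of_all μ fun _ => zero_le_one)
    (by rw [ENNReal.ofReal_ofNat]; exact hf.abs) (memLp_const (1:ℝ))
  simpa using this

theorem walsh_partial_L1_le_block_L2_general (a : ℕ → ℝ) (m M : ℕ)
    (h2 : M < 2^(m+1)) :
    ∫ x in Set.Icc (0:ℝ) 1, |∑ k ∈ Finset.Icc (2^m) M, a k * walsh k x|
      ≤ (∫ x in Set.Icc (0:ℝ) 1,
          |∑ k ∈ Finset.Ico (2^m) (2^(m+1)), a k * walsh k x| ^ (2:ℝ)) ^ ((1:ℝ)/2) := by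
  have : IsProbabilityMeasure (volume.restrict (Set.Icc (0:ℝ) 1)) := ⟨by simp⟩
  have hsub : Finset.Icc (2^m) M ⊆ Finset.Ico (2^m) (2^(m+1)) := fun k hk => by
    simp only [Finset.mem_Icc, Finset.mem_Ico] at hk ⊢; omega
  calc ∫ x in Set.Icc (0:ℝ) 1, |∑ k ∈ Finset.Icc (2^m) M, a k * walsh k x|
      ≤ (∫ x in Set.Icc (0:ℝ) 1,
          |∑ k ∈ Finset.Icc (2^m) M, a k * walsh k x| ^ (2:ℝ)) ^ ((1:ℝ)/2) :=
        integral_abs_le_integral_abs_rpow_two_rpow_half (memLp_walsh_sum _ a 2)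
    _ = (∑ k ∈ Finset.Icc (2^m) M, a k ^ 2) ^ ((1:ℝ)/2) := by
        simp_rw [Real.rpow_two, sq_abs, integral_sq_walsh_sum]
    _ ≤ (∑ k ∈ Finset.Ico (2^m) (2^(m+1)), a k ^ 2) ^ ((1:ℝ)/2) := by
        gcongr
    _ = _ := by simp_rw [Real.rpow_two, sq_abs, integral_sq_walsh_sum]

theorem walsh_partial_L1_le_block_L2 (a : ℕ → ℝ) (m M : ℕ)
    (h1 : 2^m ≤ M) (h2 : M < 2^(m+1)) :
    ∫ x in Set.Icc (0:ℝ) 1, |∑ k ∈ Finset.Icc (2^m) M, a k * walsh k x|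
      ≤ (∫ x in Set.Icc (0:ℝ) 1,
          |∑ k ∈ Finset.Ico (2^m) (2^(m+1)), a k * walsh k x| ^ (2:ℝ)) ^ ((1:ℝ)/2) :=
  walsh_partial_L1_le_block_L2_general a m M h2
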